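/- arXiv:1512.07052 — 4 statements merged into one kernel-verified Lean document; each statement's English description precedes it below -/
import Mathlib

section
/- Let (E, ζ) be a measure space and let s, f, f' be nonnegative integrable functions on E. Define the Hellinger-type quantity h²(p,q) = (1/2)∫(√p − √q)² dζ. Then with g = (f + f')/2, h²(s,g) ≤ (1/2)(h²(s,f) + h²(s,f')). -/
open MeasureTheory

theorem stmt_5 {E : Type*} [MeasurableSpace E] (ζ : Measure E)
    (s f f' : E → ℝ)
    (hsm : Measurable s) (hfm : Measurable f) (hf'm : Measurable f')
    (hs : ∀ x, 0 ≤ s x) (hf : ∀ x, 0 ≤ f x) (hf' : ∀ x, 0 ≤ f' x)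
    (hsi : Integrable s ζ) (hfi : Integrable f ζ) (hf'i : Integrable f' ζ)
    (g : E → ℝ) (hg : g = fun x => (f x + f' x) / 2) :
    (1 / 2) * ∫ x, (Real.sqrt (s x) - Real.sqrt (g x)) ^ 2 ∂ζ ≤
      (1 / 2) * ((1 / 2) * ∫ x, (Real.sqrt (s x) - Real.sqrt (f x)) ^ 2 ∂ζ +
        (1 / 2) * ∫ x, (Real.sqrt (s x) - Real.sqrt (f' x)) ^ 2 ∂ζ) := by
  subst hg
  have sqint : ∀ (p q : E → ℝ), Measurable p → Measurable q → (∀ x, 0 ≤ p x) →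
      (∀ x, 0 ≤ q x) → Integrable p ζ → Integrable q ζ →
      Integrable (fun x => (Real.sqrt (p x) - Real.sqrt (q x)) ^ 2) ζ := by
    intro p q hpm hqm hp hq hpi hqi
    apply Integrable.mono' (((hpi.add hqi).const_mul 2))
    · exact ((hpm.sqrt.sub hqm.sqrt).pow measurable_const).aestronglyMeasurable
    · filter_upwards with x
      have h1 := Real.sq_sqrt (hp x)
      have h2 := Real.sq_sqrt (hq x)
      have h3 := Real.sqrt_nonneg (p x)
      have h4 := Real.sqrt_nonneg (q x)
      simp only [Pi.add_apply, Real.norm_eq_abs]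
      rw [abs_of_nonneg (sq_nonneg (Real.sqrt (p x) - Real.sqrt (q x)))]
      nlinarith [sq_nonneg (Real.sqrt (p x) + Real.sqrt (q x))]
  have hgm : Measurable (fun x => (f x + f' x) / 2) := (hfm.add hf'm).div_const 2
  have hgnn : ∀ x, (0:ℝ) ≤ (f x + f' x) / 2 := fun x => by have := hf x; have := hf' x; linarith
  have hgi : Integrable (fun x => (f x + f' x) / 2) ζ := (hfi.add hf'i).div_const 2
  have I0 := sqint s (fun x => (f x + f' x) / 2) hsm hgm hs hgnn hsi hgi
  have I1 := sqint s f hsm hfm hs hf hsi hfi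
  have I2 := sqint s f' hsm hf'm hs hf' hsi hf'i
  have key : ∀ x, (Real.sqrt (s x) - Real.sqrt ((f x + f' x) / 2)) ^ 2 ≤
      ((Real.sqrt (s x) - Real.sqrt (f x)) ^ 2 +
        (Real.sqrt (s x) - Real.sqrt (f' x)) ^ 2) / 2 := by
    intro x
    set a := Real.sqrt (s x)
    set b := Real.sqrt (f x)
    set c := Real.sqrt (f' x)
    set m := Real.sqrt ((f x + f' x) / 2) with hmdef
    have ha : 0 ≤ a := Real.sqrt_nonneg _
    have hb2 : b ^ 2 = f x := Real.sq_sqrt (hf x)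
    have hc2 : c ^ 2 = f' x := Real.sq_sqrt (hf' x)
    have hm2 : m ^ 2 = (f x + f' x) / 2 := Real.sq_sqrt (hgnn x)
    have hbc : 0 ≤ b := Real.sqrt_nonneg _
    have hcc : 0 ≤ c := Real.sqrt_nonneg _
    have hm : (b + c) / 2 ≤ m := by
      rw [hmdef, Real.le_sqrt (by positivity) (hgnn x)]
      nlinarith [sq_nonneg (b - c)]
    nlinarith
  have hmono : ∫ x, (Real.sqrt (s x) - Real.sqrt ((f x + f' x) / 2)) ^ 2 ∂ζ ≤
      ∫ x, ((Real.sqrt (s x) - Real.sqrt (f x)) ^ 2 +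
        (Real.sqrt (s x) - Real.sqrt (f' x)) ^ 2) / 2 ∂ζ :=
    integral_mono I0 ((I1.add I2).div_const 2) key
  rw [integral_div, integral_add I1 I2] at hmono
  linarith
end

section
/- Let (E, ζ) be a measure space, s a probability density and f, f' nonnegative integrable functions with g = (f+f')/2, all with respect to ζ. Define T̄ = (1/√2)[∫ ((√f' − √f)/√g) s dζ + ∫ √g(√f' − √f) dζ + ∫ (f − f') dζ] (convention 0/0 = 0). Then with h²(p,q) = (1/2)∫(√p − √q)² dζ: h²(s,f') − h²(s,f) = −(1/√2)T̄ + (1/2)∫ √(f'/g)(√s − √g)² dζ − (1/2)∫ √(f/g)(√s − √g)² dζ. -/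
/-! Expanding the squares gives `∫ (√s - √p)² = ∫ s + ∫ p - 2 ∫ √s √p` and
`∫ √(p/g) (√s - √g)² = ∫ (√p / √g) s + ∫ √g √p - 2 ∫ √s √p` (where `g = 0` also `p = 0`,
as `p ≤ 2g`). The cross terms `∫ √s √p` cancel between the two sides of the identity, and
what remains is linear in the three integrals defining `T̄`. All integrals involved are finite
because `√p √q ≤ (p + q) / 2` and `√p / √g ≤ √2`. -/

open MeasureTheory

theorem Real.sqrt_div_mul_sq_sub_sqrt {s g p : ℝ} (hs : 0 ≤ s) (hg : 0 ≤ g) (hp : 0 ≤ p)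
    (hpg : g = 0 → p = 0) :
    √(p / g) * (√s - √g) ^ 2 = √p / √g * s + √g * √p - 2 * (√s * √p) := by
  rcases hg.eq_or_lt with h | h
  · simp [← h, hpg h.symm]
  · have hsg : √g ≠ 0 := (Real.sqrt_pos.mpr h).ne'
    rw [Real.sqrt_div hp]
    field_simp
    linear_combination √p * Real.sq_sqrt hs

section Hellinger

variable {E : Type*} [MeasurableSpace E] {μ : Measure E} {s g p q : E → ℝ}

theorem integrable_sqrt_mul_sqrt (hp : ∀ x, 0 ≤ p x) (hq : ∀ x, 0 ≤ q x)
    (hpi : Integrable p μ) (hqi : Integrable q μ) :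
    Integrable (fun x => √(p x) * √(q x)) μ := by
  refine ((hpi.add hqi).div_const 2).mono'
    ((hpi.aemeasurable.sqrt.mul hqi.aemeasurable.sqrt).aestronglyMeasurable) ?_
  filter_upwards with x
  rw [Real.norm_of_nonneg (by positivity), Pi.add_apply]
  nlinarith [Real.sq_sqrt (hp x), Real.sq_sqrt (hq x), sq_nonneg (√(p x) - √(q x))]

theorem integral_sq_sqrt_sub_sqrt (hp : ∀ x, 0 ≤ p x) (hq : ∀ x, 0 ≤ q x)
    (hpi : Integrable p μ) (hqi : Integrable q μ) :
    ∫ x, (√(p x) - √(q x)) ^ 2 ∂μ = ∫ x, p x ∂μ + ∫ x, q x ∂μ - 2 * ∫ x, √(p x) * √(q x) ∂μ := by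
  have hexpand : ∀ x, (√(p x) - √(q x)) ^ 2 = p x + q x - 2 * (√(p x) * √(q x)) := fun x => by
    nlinarith [Real.sq_sqrt (hp x), Real.sq_sqrt (hq x)]
  have hsum : Integrable (fun x => p x + q x) μ := hpi.add hqi
  simp only [hexpand]
  rw [integral_sub hsum ((integrable_sqrt_mul_sqrt hp hq hpi hqi).const_mul 2),
    integral_add hpi hqi, integral_const_mul]

theorem integrable_sqrt_div_sqrt_mul {c : ℝ} (hs : ∀ x, 0 ≤ s x) (hg : ∀ x, 0 ≤ g x)
    (hsi : Integrable s μ) (hgm : AEMeasurable g μ) (hpi : Integrable p μ)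
    (hpg : ∀ x, p x ≤ c * g x) :
    Integrable (fun x => √(p x) / √(g x) * s x) μ := by
  refine (hsi.const_mul √c).mono'
    ((hpi.aemeasurable.sqrt.div hgm.sqrt).mul hsi.aemeasurable).aestronglyMeasurable ?_
  filter_upwards with x
  rw [Real.norm_of_nonneg (mul_nonneg (by positivity) (hs x))]
  refine mul_le_mul_of_nonneg_right ?_ (hs x)
  rcases (hg x).eq_or_lt with h | h
  · simp [← h]
  · rw [div_le_iff₀ (Real.sqrt_pos.mpr h), ← Real.sqrt_mul' c (hg x)]
    exact Real.sqrt_le_sqrt (hpg x)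

theorem integral_sqrt_div_mul_sq_sub_sqrt {c : ℝ} (hs : ∀ x, 0 ≤ s x) (hg : ∀ x, 0 ≤ g x)
    (hp : ∀ x, 0 ≤ p x) (hsi : Integrable s μ) (hgi : Integrable g μ) (hpi : Integrable p μ)
    (hpg : ∀ x, p x ≤ c * g x) :
    ∫ x, √(p x / g x) * (√(s x) - √(g x)) ^ 2 ∂μ =
      ∫ x, √(p x) / √(g x) * s x ∂μ + ∫ x, √(g x) * √(p x) ∂μ
        - 2 * ∫ x, √(s x) * √(p x) ∂μ := by
  have hpg₀ : ∀ x, g x = 0 → p x = 0 := fun x h =>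
    le_antisymm (by simpa [h] using hpg x) (hp x)
  simp only [fun x => Real.sqrt_div_mul_sq_sub_sqrt (hs x) (hg x) (hp x) (hpg₀ x)]
  have hratio := integrable_sqrt_div_sqrt_mul hs hg hsi hgi.aemeasurable hpi hpg
  have hgp := integrable_sqrt_mul_sqrt hg hp hgi hpi
  have hsum : Integrable (fun x => √(p x) / √(g x) * s x + √(g x) * √(p x)) μ := hratio.add hgp
  rw [integral_sub hsum ((integrable_sqrt_mul_sqrt hs hp hsi hpi).const_mul 2),
    integral_add hratio hgp, integral_const_mul]

end Hellinger

theorem stmt_13_general {E : Type*} [MeasurableSpace E] (ζ : Measure E)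
    (s f f' : E → ℝ)
    (hs : ∀ x, 0 ≤ s x) (hf : ∀ x, 0 ≤ f x) (hf' : ∀ x, 0 ≤ f' x)
    (hsi : Integrable s ζ) (hfi : Integrable f ζ) (hf'i : Integrable f' ζ)
    (g : E → ℝ) (hg : g = fun x => (f x + f' x) / 2)
    (T : ℝ)
    (hT : T = (1 / Real.sqrt 2) *
      ((∫ x, ((Real.sqrt (f' x) - Real.sqrt (f x)) / Real.sqrt (g x)) * s x ∂ζ) +
       (∫ x, Real.sqrt (g x) * (Real.sqrt (f' x) - Real.sqrt (f x)) ∂ζ) +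
       (∫ x, (f x - f' x) ∂ζ))) :
    (1 / 2) * ∫ x, (Real.sqrt (s x) - Real.sqrt (f' x)) ^ 2 ∂ζ -
      (1 / 2) * ∫ x, (Real.sqrt (s x) - Real.sqrt (f x)) ^ 2 ∂ζ =
    -(1 / Real.sqrt 2) * T +
      (1 / 2) * ∫ x, Real.sqrt (f' x / g x) * (Real.sqrt (s x) - Real.sqrt (g x)) ^ 2 ∂ζ -
      (1 / 2) * ∫ x, Real.sqrt (f x / g x) * (Real.sqrt (s x) - Real.sqrt (g x)) ^ 2 ∂ζ := by
  have hg0 : ∀ x, 0 ≤ g x := fun x => by simp only [hg]; linarith [hf x, hf' x]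
  have hgi : Integrable g ζ := hg ▸ (hfi.add hf'i).div_const 2
  have hfg : ∀ x, f x ≤ 2 * g x := fun x => by simp only [hg]; linarith [hf' x]
  have hf'g : ∀ x, f' x ≤ 2 * g x := fun x => by simp only [hg]; linarith [hf x]
  rw [hT, neg_mul, ← mul_assoc, one_div_mul_one_div, Real.mul_self_sqrt zero_le_two,
    integral_sq_sqrt_sub_sqrt hs hf hsi hfi, integral_sq_sqrt_sub_sqrt hs hf' hsi hf'i,
    integral_sqrt_div_mul_sq_sub_sqrt hs hg0 hf hsi hgi hfi hfg,
    integral_sqrt_div_mul_sq_sub_sqrt hs hg0 hf' hsi hgi hf'i hf'g]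
  simp only [sub_div, sub_mul, mul_sub]
  rw [integral_sub (integrable_sqrt_div_sqrt_mul hs hg0 hsi hgi.aemeasurable hf'i hf'g)
      (integrable_sqrt_div_sqrt_mul hs hg0 hsi hgi.aemeasurable hfi hfg),
    integral_sub (integrable_sqrt_mul_sqrt hg0 hf' hgi hf'i) (integrable_sqrt_mul_sqrt hg0 hf hgi hfi),
    integral_sub hfi hf'i]
  ring

theorem stmt_13 {E : Type*} [MeasurableSpace E] (ζ : Measure E)
    (s f f' : E → ℝ)
    (hsm : Measurable s) (hfm : Measurable f) (hf'm : Measurable f')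
    (hs : ∀ x, 0 ≤ s x) (hf : ∀ x, 0 ≤ f x) (hf' : ∀ x, 0 ≤ f' x)
    (hsi : Integrable s ζ) (hfi : Integrable f ζ) (hf'i : Integrable f' ζ)
    (hprob : ∫ x, s x ∂ζ = 1)
    (g : E → ℝ) (hg : g = fun x => (f x + f' x) / 2)
    (T : ℝ)
    (hT : T = (1 / Real.sqrt 2) *
      ((∫ x, ((Real.sqrt (f' x) - Real.sqrt (f x)) / Real.sqrt (g x)) * s x ∂ζ) +
       (∫ x, Real.sqrt (g x) * (Real.sqrt (f' x) - Real.sqrt (f x)) ∂ζ) +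
       (∫ x, (f x - f' x) ∂ζ))) :
    (1 / 2) * ∫ x, (Real.sqrt (s x) - Real.sqrt (f' x)) ^ 2 ∂ζ -
      (1 / 2) * ∫ x, (Real.sqrt (s x) - Real.sqrt (f x)) ^ 2 ∂ζ =
    -(1 / Real.sqrt 2) * T +
      (1 / 2) * ∫ x, Real.sqrt (f' x / g x) * (Real.sqrt (s x) - Real.sqrt (g x)) ^ 2 ∂ζ -
      (1 / 2) * ∫ x, Real.sqrt (f x / g x) * (Real.sqrt (s x) - Real.sqrt (g x)) ^ 2 ∂ζ :=
  stmt_13_general ζ s f f' hs hf hf' hsi hfi hf'i g hg T hT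
end

section
/- Let (E, ζ) be a measure space, s a probability density and f, f' nonnegative integrable functions, g = (f+f')/2, ψ₁(x,y) = (√y−√x)/√(x+y) (convention 0/0=0). Then ∫ ψ₁(f, f')² s dζ ≤ 6(h²(s,f) + h²(s,f')), where h²(p,q) = (1/2)∫(√p − √q)² dζ. -/
open MeasureTheory

lemma key14 (a b c : ℝ) (ha : 0 ≤ a) (hb : 0 ≤ b) :
    ((b - a) / Real.sqrt (a ^ 2 + b ^ 2)) ^ 2 * c ^ 2 ≤ (c - a) ^ 2 + (c - b) ^ 2 := by
  rcases eq_or_lt_of_le (by positivity : (0:ℝ) ≤ a ^ 2 + b ^ 2) with h | h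
  · have ha0 : a = 0 := by nlinarith [sq_nonneg a, sq_nonneg b]
    have hb0 : b = 0 := by nlinarith [sq_nonneg a, sq_nonneg b]
    simp [ha0, hb0]
    positivity
  · rw [div_pow, Real.sq_sqrt h.le, div_mul_eq_mul_div, div_le_iff₀ h]
    nlinarith [sq_nonneg (a * (c - a) + b * (c - b))]

theorem stmt_14 {E : Type*} [MeasurableSpace E] (ζ : Measure E)
    (s f f' : E → ℝ)
    (hsm : Measurable s) (hfm : Measurable f) (hf'm : Measurable f')
    (hs : ∀ x, 0 ≤ s x) (hf : ∀ x, 0 ≤ f x) (hf' : ∀ x, 0 ≤ f' x)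
    (hsi : Integrable s ζ) (hfi : Integrable f ζ) (hf'i : Integrable f' ζ)
    (hprob : ∫ x, s x ∂ζ = 1) :
    ∫ x, ((Real.sqrt (f' x) - Real.sqrt (f x)) / Real.sqrt (f x + f' x)) ^ 2 * s x ∂ζ ≤
      6 * ((1 / 2) * ∫ x, (Real.sqrt (s x) - Real.sqrt (f x)) ^ 2 ∂ζ +
        (1 / 2) * ∫ x, (Real.sqrt (s x) - Real.sqrt (f' x)) ^ 2 ∂ζ) := by
  have hpt : ∀ x, ((Real.sqrt (f' x) - Real.sqrt (f x)) / Real.sqrt (f x + f' x)) ^ 2 * s x ≤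
      (Real.sqrt (s x) - Real.sqrt (f x)) ^ 2 + (Real.sqrt (s x) - Real.sqrt (f' x)) ^ 2 := by
    intro x
    have h1 : f x + f' x = Real.sqrt (f x) ^ 2 + Real.sqrt (f' x) ^ 2 := by
      rw [Real.sq_sqrt (hf x), Real.sq_sqrt (hf' x)]
    have := key14 (Real.sqrt (f x)) (Real.sqrt (f' x)) (Real.sqrt (s x))
      (Real.sqrt_nonneg _) (Real.sqrt_nonneg _)
    rwa [← h1, Real.sq_sqrt (hs x)] at this
  -- integrability of the square terms
  have Isq : ∀ (u : E → ℝ), Measurable u → (∀ x, 0 ≤ u x) → Integrable u ζ →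
      Integrable (fun x => (Real.sqrt (s x) - Real.sqrt (u x)) ^ 2) ζ := by
    intro u hum hu hui
    refine Integrable.mono ((hsi.const_mul 2).add (hui.const_mul 2)) ?_ ?_
    · exact ((hsm.sqrt.sub hum.sqrt).pow_const 2).aestronglyMeasurable
    · filter_upwards with x
      have h1 : (Real.sqrt (s x) - Real.sqrt (u x)) ^ 2 ≤ 2 * s x + 2 * u x := by
        nlinarith [Real.sq_sqrt (hs x), Real.sq_sqrt (hu x), Real.sqrt_nonneg (s x),
          Real.sqrt_nonneg (u x), sq_nonneg (Real.sqrt (s x) + Real.sqrt (u x))]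
      have h2 : 0 ≤ 2 * s x + 2 * u x := by nlinarith [hs x, hu x]
      simp only [Pi.add_apply, Real.norm_eq_abs]
      rw [abs_of_nonneg (sq_nonneg _), abs_of_nonneg h2]
      exact h1
  have IA := Isq f hfm hf hfi
  have IB := Isq f' hf'm hf' hf'i
  have IL : Integrable (fun x => ((Real.sqrt (f' x) - Real.sqrt (f x)) / Real.sqrt (f x + f' x)) ^ 2 * s x) ζ := by
    refine Integrable.mono (IA.add IB) ?_ ?_
    · exact (((hf'm.sqrt.sub hfm.sqrt).div (hfm.add hf'm).sqrt).pow_const 2).mul hsm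
        |>.aestronglyMeasurable
    · filter_upwards with x
      have hL : 0 ≤ ((Real.sqrt (f' x) - Real.sqrt (f x)) / Real.sqrt (f x + f' x)) ^ 2 * s x :=
        mul_nonneg (sq_nonneg _) (hs x)
      have hR : 0 ≤ (Real.sqrt (s x) - Real.sqrt (f x)) ^ 2 + (Real.sqrt (s x) - Real.sqrt (f' x)) ^ 2 := by positivity
      simp only [Pi.add_apply, Real.norm_eq_abs]
      rw [abs_of_nonneg hL, abs_of_nonneg hR]
      exact hpt x
  have hmono : ∫ x, ((Real.sqrt (f' x) - Real.sqrt (f x)) / Real.sqrt (f x + f' x)) ^ 2 * s x ∂ζ ≤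
      ∫ x, ((Real.sqrt (s x) - Real.sqrt (f x)) ^ 2 + (Real.sqrt (s x) - Real.sqrt (f' x)) ^ 2) ∂ζ :=
    integral_mono IL (IA.add IB) hpt
  rw [integral_add IA IB] at hmono
  have hAnn : 0 ≤ ∫ x, (Real.sqrt (s x) - Real.sqrt (f x)) ^ 2 ∂ζ :=
    integral_nonneg fun x => sq_nonneg _
  have hBnn : 0 ≤ ∫ x, (Real.sqrt (s x) - Real.sqrt (f' x)) ^ 2 ∂ζ :=
    integral_nonneg fun x => sq_nonneg _
  linarith
end

section
/- Let (E, ζ) be a measure space and s, f, f' nonnegative integrable functions with (√f' − √f)²/g ≤ 2 where g = (f+f')/2. Then (1/2)∫ (√f'−√f)²·(s/g) dζ ≤ 4h²(s,g) + 2h²(f,f') where h²(p,q) = (1/2)∫(√p−√q)² dζ (convention 0/0 = 0). -/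
open MeasureTheory

theorem stmt_15 {E : Type*} [MeasurableSpace E] (ζ : Measure E)
    (s f f' : E → ℝ)
    (hsm : Measurable s) (hfm : Measurable f) (hf'm : Measurable f')
    (hs : ∀ x, 0 ≤ s x) (hf : ∀ x, 0 ≤ f x) (hf' : ∀ x, 0 ≤ f' x)
    (hsi : Integrable s ζ) (hfi : Integrable f ζ) (hf'i : Integrable f' ζ)
    (g : E → ℝ) (hg : g = fun x => (f x + f' x) / 2)
    (hbd : ∀ x, (Real.sqrt (f' x) - Real.sqrt (f x)) ^ 2 / g x ≤ 2) :
    (1 / 2) * ∫ x, (Real.sqrt (f' x) - Real.sqrt (f x)) ^ 2 * (s x / g x) ∂ζ ≤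
      4 * ((1 / 2) * ∫ x, (Real.sqrt (s x) - Real.sqrt (g x)) ^ 2 ∂ζ) +
      2 * ((1 / 2) * ∫ x, (Real.sqrt (f x) - Real.sqrt (f' x)) ^ 2 ∂ζ) := by
  have hgm : Measurable g := by
    rw [hg]; exact (hfm.add hf'm).div_const 2
  have hgnn : ∀ x, 0 ≤ g x := by
    intro x; rw [hg]; have := hf x; have := hf' x; positivity
  have hgi : Integrable g ζ := by
    rw [hg]; exact (hfi.add hf'i).div_const 2
  have hsqrt : Measurable fun y : ℝ => Real.sqrt y :=
    Real.continuous_sqrt.measurable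
  -- pointwise key inequality
  have key : ∀ x, (Real.sqrt (f' x) - Real.sqrt (f x)) ^ 2 * (s x / g x) ≤
      4 * (Real.sqrt (s x) - Real.sqrt (g x)) ^ 2 +
      2 * (Real.sqrt (f x) - Real.sqrt (f' x)) ^ 2 := by
    intro x
    rcases eq_or_lt_of_le (hgnn x) with h0 | hpos
    · simp only [← h0, div_zero, mul_zero]
      positivity
    · have hc : Real.sqrt (s x) ^ 2 = s x := Real.sq_sqrt (hs x)
      have hd : Real.sqrt (g x) ^ 2 = g x := Real.sq_sqrt (hgnn x)
      have hsle : s x ≤ 2 * (Real.sqrt (s x) - Real.sqrt (g x)) ^ 2 + 2 * g x := by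
        nlinarith [sq_nonneg (Real.sqrt (s x) - 2 * Real.sqrt (g x))]
      have hq : s x / g x * g x = s x := div_mul_cancel₀ _ (ne_of_gt hpos)
      have hqnn : 0 ≤ s x / g x := div_nonneg (hs x) (hgnn x)
      have hDg : (Real.sqrt (f' x) - Real.sqrt (f x)) ^ 2 ≤ 2 * g x :=
        (div_le_iff₀ hpos).mp (hbd x)
      have hDnn : 0 ≤ (Real.sqrt (f' x) - Real.sqrt (f x)) ^ 2 := sq_nonneg _
      have hAnn : 0 ≤ (Real.sqrt (s x) - Real.sqrt (g x)) ^ 2 := sq_nonneg _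
      have hBeq : (Real.sqrt (f x) - Real.sqrt (f' x)) ^ 2 =
          (Real.sqrt (f' x) - Real.sqrt (f x)) ^ 2 := by ring
      rw [hBeq]
      nlinarith [mul_le_mul_of_nonneg_left hsle hDnn,
        mul_le_mul_of_nonneg_right hDg hAnn, mul_nonneg hDnn hqnn]
  -- integrability
  have hAm : Measurable fun x => (Real.sqrt (s x) - Real.sqrt (g x)) ^ 2 :=
    (((hsqrt.comp hsm).sub (hsqrt.comp hgm)).pow_const 2)
  have hBm : Measurable fun x => (Real.sqrt (f x) - Real.sqrt (f' x)) ^ 2 :=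
    (((hsqrt.comp hfm).sub (hsqrt.comp hf'm)).pow_const 2)
  have hAi : Integrable (fun x => (Real.sqrt (s x) - Real.sqrt (g x)) ^ 2) ζ := by
    refine Integrable.mono' ((hsi.const_mul 2).add (hgi.const_mul 2))
      hAm.aestronglyMeasurable (ae_of_all _ fun x => ?_)
    rw [Real.norm_of_nonneg (sq_nonneg _)]
    simp only [Pi.add_apply]
    nlinarith [Real.sq_sqrt (hs x), Real.sq_sqrt (hgnn x),
      sq_nonneg (Real.sqrt (s x) + Real.sqrt (g x))]
  have hBi : Integrable (fun x => (Real.sqrt (f x) - Real.sqrt (f' x)) ^ 2) ζ := by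
    refine Integrable.mono' ((hfi.const_mul 2).add (hf'i.const_mul 2))
      hBm.aestronglyMeasurable (ae_of_all _ fun x => ?_)
    rw [Real.norm_of_nonneg (sq_nonneg _)]
    simp only [Pi.add_apply]
    nlinarith [Real.sq_sqrt (hf x), Real.sq_sqrt (hf' x),
      sq_nonneg (Real.sqrt (f x) + Real.sqrt (f' x))]
  have hRi : Integrable (fun x => 4 * (Real.sqrt (s x) - Real.sqrt (g x)) ^ 2 +
      2 * (Real.sqrt (f x) - Real.sqrt (f' x)) ^ 2) ζ :=
    (hAi.const_mul 4).add (hBi.const_mul 2)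
  have hLm : Measurable fun x =>
      (Real.sqrt (f' x) - Real.sqrt (f x)) ^ 2 * (s x / g x) :=
    (((hsqrt.comp hf'm).sub (hsqrt.comp hfm)).pow_const 2).mul (hsm.div hgm)
  have hLi : Integrable (fun x =>
      (Real.sqrt (f' x) - Real.sqrt (f x)) ^ 2 * (s x / g x)) ζ := by
    refine Integrable.mono' hRi hLm.aestronglyMeasurable (ae_of_all _ fun x => ?_)
    rw [Real.norm_of_nonneg (mul_nonneg (sq_nonneg _)
      (div_nonneg (hs x) (hgnn x)))]
    exact key x
  have hmono : ∫ x, (Real.sqrt (f' x) - Real.sqrt (f x)) ^ 2 * (s x / g x) ∂ζ ≤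
      ∫ x, (4 * (Real.sqrt (s x) - Real.sqrt (g x)) ^ 2 +
        2 * (Real.sqrt (f x) - Real.sqrt (f' x)) ^ 2) ∂ζ :=
    integral_mono hLi hRi key
  rw [integral_add (hAi.const_mul 4) (hBi.const_mul 2),
    integral_const_mul, integral_const_mul] at hmono
  linarith
end
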